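/- arXiv:2206.02403 — 8 statements merged into one kernel-verified Lean document; each statement's English description precedes it below -/
import Mathlib

section
/- Let a be a nonzero split quaternion with I_a = 0, written a = z1 + z2 j with z1, z2 complex. Define a^+ = (conj(z1) + z2 j)/(4 |z1|^2). Then a * a^+ * a = a and a^+ * a * a^+ = a^+. -/
open Quaternion

/-- The split quaternion algebra: `i^2 = -1`, `j^2 = 1`. -/
abbrev Hs : Type := ℍ[ℝ, -1, 1]

/-- The embedding of the complex numbers into the split quaternions. -/
def toHs (z : ℂ) : Hs := ⟨z.re, z.im, 0, 0⟩

/-- The basis element `j` of the split quaternions. -/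
def jq : Hs := ⟨0, 0, 1, 0⟩

/-!
Write `a = z₁ + z₂ j` and `b = z̄₁ + z₂ j`. Since `j z = z̄ j` and `j² = 1`, split quaternions
multiply like pairs of complex numbers, `(z₁, z₂)(w₁, w₂) = (z₁ w₁ + z₂ w̄₂, z₁ w₂ + z₂ w̄₁)`.
When `|z₁| = |z₂|` this gives `a b a = 4 |z₁|² a`, and, applying the same identity to `z̄₁`,
`b a b = 4 |z₁|² b`; so `b / (4 |z₁|²)` is a reflexive generalized inverse of `a`, and
`a ≠ 0` forces `z₁ ≠ 0`.
-/

theorem mul_inv_smul_mul_eq_and_inv_smul_mul_mul_inv_smul_eq {R A : Type*} [Field R] [Ring A]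
    [Algebra R A] {a b : A} {c : R} (hc : c ≠ 0) (hab : a * b * a = c • a)
    (hba : b * a * b = c • b) :
    a * (c⁻¹ • b) * a = a ∧ c⁻¹ • b * a * (c⁻¹ • b) = c⁻¹ • b := by
  constructor
  · rw [mul_smul_comm, smul_mul_assoc, hab, inv_smul_smul₀ hc]
  · rw [smul_mul_assoc, smul_mul_assoc, mul_smul_comm, hba, smul_smul, smul_smul, mul_assoc,
      inv_mul_cancel₀ hc, mul_one]

def ofPair (z₁ z₂ : ℂ) : Hs := toHs z₁ + toHs z₂ * jq

theorem ofPair_mul_ofPair (z₁ z₂ w₁ w₂ : ℂ) :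
    ofPair z₁ z₂ * ofPair w₁ w₂ =
      ofPair (z₁ * w₁ + z₂ * starRingEnd ℂ w₂) (z₁ * w₂ + z₂ * starRingEnd ℂ w₁) := by
  ext <;> simp [ofPair, toHs, jq] <;> ring

theorem smul_ofPair (r : ℝ) (z₁ z₂ : ℂ) : r • ofPair z₁ z₂ = ofPair (r * z₁) (r * z₂) := by
  ext <;> simp [ofPair, toHs, jq]

theorem ofPair_zero_zero : ofPair 0 0 = 0 := by
  ext <;> simp [ofPair, toHs]

theorem ofPair_mul_ofPair_conj_mul_ofPair {z₁ z₂ : ℂ}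
    (h : Complex.normSq z₁ = Complex.normSq z₂) :
    ofPair z₁ z₂ * ofPair (starRingEnd ℂ z₁) z₂ * ofPair z₁ z₂ =
      (4 * Complex.normSq z₁) • ofPair z₁ z₂ := by
  have h₁ := Complex.mul_conj z₁
  have h₂ := Complex.mul_conj z₂
  have h' : (Complex.normSq z₁ : ℂ) = Complex.normSq z₂ := congrArg _ h
  rw [ofPair_mul_ofPair, ofPair_mul_ofPair, smul_ofPair, Complex.conj_conj]
  push_cast
  congr 1
  · linear_combination z₁ * h₁ + 3 * z₁ * h₂ - 3 * z₁ * h'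
  · linear_combination 3 * z₂ * h₁ + z₂ * h₂ - z₂ * h'

/-- If `a = z1 + z2 j` is a nonzero split quaternion with `I_a = |z1|^2 - |z2|^2 = 0`,
then its Moore–Penrose inverse `a⁺ = (conj z1 + z2 j) / (4 |z1|^2)` satisfies
`a * a⁺ * a = a` and `a⁺ * a * a⁺ = a⁺`. -/
theorem pinv_props (z1 z2 : ℂ) (a : Hs) (ha : a = toHs z1 + toHs z2 * jq)
    (hne : a ≠ 0) (hI : Complex.normSq z1 - Complex.normSq z2 = 0) :
    a * ((4 * Complex.normSq z1)⁻¹ • (toHs (starRingEnd ℂ z1) + toHs z2 * jq)) * a = a ∧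
    ((4 * Complex.normSq z1)⁻¹ • (toHs (starRingEnd ℂ z1) + toHs z2 * jq)) * a *
        ((4 * Complex.normSq z1)⁻¹ • (toHs (starRingEnd ℂ z1) + toHs z2 * jq)) =
      (4 * Complex.normSq z1)⁻¹ • (toHs (starRingEnd ℂ z1) + toHs z2 * jq) := by
  have hnorm : Complex.normSq z1 = Complex.normSq z2 := sub_eq_zero.mp hI
  have hn : Complex.normSq z1 ≠ 0 := by
    intro h0
    have hz2 : z2 = 0 := Complex.normSq_eq_zero.mp (hnorm ▸ h0)
    rw [Complex.normSq_eq_zero] at h0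
    exact hne (by rw [ha, h0, hz2]; exact ofPair_zero_zero)
  have hba := ofPair_mul_ofPair_conj_mul_ofPair (z₁ := starRingEnd ℂ z1) (z₂ := z2)
    (by rwa [Complex.normSq_conj])
  rw [Complex.conj_conj, Complex.normSq_conj] at hba
  subst ha
  exact mul_inv_smul_mul_eq_and_inv_smul_mul_mul_inv_smul_eq
    (mul_ne_zero four_ne_zero hn) (ofPair_mul_ofPair_conj_mul_ofPair hnorm) hba
end

section
/- Let a be a nonzero split quaternion with I_a = 0, written a = z1 + z2 j. Then a * a^+ = (1 + (z2/conj(z1)) j)/2 and a^+ * a = (1 + (z2/z1) j)/2, where a^+ = (conj(z1) + z2 j)/(4|z1|^2). -/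
/-!
Since `j z = (conj z) j` and `j² = 1`, the split quaternions `z₁ + z₂ j` multiply like
`(z₁ + z₂ j)(w₁ + w₂ j) = (z₁ w₁ + z₂ conj w₂) + (z₁ w₂ + z₂ conj w₁) j`. Hence
`a (conj z₁ + z₂ j) = (|z₁|² + |z₂|²) + 2 z₁ z₂ j` and `(conj z₁ + z₂ j) a = (|z₁|² + |z₂|²) + 2 conj z₁ z₂ j`.
When `I_a = 0` the scalar parts equal `2 |z₁|²`, which is nonzero because `a ≠ 0`, and dividing
by `4 |z₁|² = 4 z₁ conj z₁` gives the two formulas.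
-/

open Quaternion

open ComplexConjugate

theorem toHs_zero : toHs 0 = 0 := by
  ext <;> simp [toHs]

theorem toHs_one : toHs 1 = 1 := by
  ext <;> simp [toHs]

theorem smul_toHs (r : ℝ) (z : ℂ) : r • toHs z = toHs (r * z) := by
  ext <;> simp [toHs]

theorem smul_toHs_add_toHs_mul_jq (r : ℝ) (z₁ z₂ : ℂ) :
    r • (toHs z₁ + toHs z₂ * jq) = toHs (r * z₁) + toHs (r * z₂) * jq := by
  rw [smul_add, ← smul_mul_assoc, smul_toHs, smul_toHs]

theorem toHs_add_toHs_mul_jq_mul (z₁ z₂ w₁ w₂ : ℂ) :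
    (toHs z₁ + toHs z₂ * jq) * (toHs w₁ + toHs w₂ * jq) =
      toHs (z₁ * w₁ + z₂ * conj w₂) + toHs (z₁ * w₂ + z₂ * conj w₁) * jq := by
  ext <;> simp [toHs, jq] <;> ring

theorem ne_zero_of_toHs_add_toHs_mul_jq_ne_zero {z₁ z₂ : ℂ}
    (h : Complex.normSq z₁ = Complex.normSq z₂) (hne : toHs z₁ + toHs z₂ * jq ≠ 0) :
    z₁ ≠ 0 := by
  rintro rfl
  obtain rfl : z₂ = 0 := Complex.normSq_eq_zero.mp (by simpa using h.symm)
  simp [toHs_zero] at hne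

/-- If `a = z1 + z2 j` is a nonzero split quaternion with `I_a = 0` and
`a⁺ = (conj z1 + z2 j)/(4 |z1|^2)`, then `a * a⁺ = (1 + (z2 / conj z1) j)/2`
and `a⁺ * a = (1 + (z2 / z1) j)/2`. -/
theorem mul_pinv_eq (z1 z2 : ℂ) (a : Hs) (ha : a = toHs z1 + toHs z2 * jq)
    (hne : a ≠ 0) (hI : Complex.normSq z1 - Complex.normSq z2 = 0) :
    a * ((4 * Complex.normSq z1)⁻¹ • (toHs (starRingEnd ℂ z1) + toHs z2 * jq)) =
      (2 : ℝ)⁻¹ • (1 + toHs (z2 / starRingEnd ℂ z1) * jq) ∧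
    ((4 * Complex.normSq z1)⁻¹ • (toHs (starRingEnd ℂ z1) + toHs z2 * jq)) * a =
      (2 : ℝ)⁻¹ • (1 + toHs (z2 / z1) * jq) := by
  subst ha
  have hnorm : Complex.normSq z1 = Complex.normSq z2 := sub_eq_zero.mp hI
  have hz1 : z1 ≠ 0 := ne_zero_of_toHs_add_toHs_mul_jq_ne_zero hnorm hne
  have hz1' : conj z1 ≠ 0 := (map_ne_zero _).mpr hz1
  have hn : (Complex.normSq z1 : ℂ) = z1 * conj z1 := (Complex.mul_conj z1).symm
  have hn2 : z2 * conj z2 = z1 * conj z1 := by rw [Complex.mul_conj, ← hnorm, hn]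
  rw [mul_smul_comm, smul_mul_assoc, toHs_add_toHs_mul_jq_mul, toHs_add_toHs_mul_jq_mul,
    ← toHs_one]
  simp only [smul_toHs_add_toHs_mul_jq, Complex.conj_conj]
  refine ⟨congrArg₂ (fun z w ↦ toHs z + toHs w * jq) ?_ ?_,
    congrArg₂ (fun z w ↦ toHs z + toHs w * jq) ?_ ?_⟩ <;> push_cast <;> rw [hn] <;> field_simp
  · linear_combination 2 * hn2
  · ring
  · linear_combination 2 * hn2
  · ring
end

section
/- Let a, d be split quaternions and define a^+ to be 0 if a = 0, conj(a)/I_a if I_a ≠ 0, and (conj(z1) + z2 j)/(4|z1|^2) if I_a = 0 and a ≠ 0 (where a = z1 + z2 j). Then the equation a x = d has a solution x in H_s if and only if a * a^+ * d = d. -/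
/-!
`a⁺` is an inner inverse of `a`, i.e. `a a⁺ a = a`; for any inner inverse `b` of `a` the
equation `a x = d` is solvable iff `a b d = d`, a solution being `x = b d`. When `I_a ≠ 0` the
identity `a a⁺ a = a` is `a conj(a) = I_a`. When `I_a = 0` we have `|z₂| = |z₁|`, so `a ≠ 0`
forces `z₁ ≠ 0`, and a direct computation gives `a (conj z₁ + z₂ j) a = 4 |z₁|² a`.
-/

open Quaternion

/-- The real scalar `I_x = x0^2 + x1^2 - x2^2 - x3^2` of a split quaternion. -/
def Ix (x : Hs) : ℝ := x.re ^ 2 + x.imI ^ 2 - x.imJ ^ 2 - x.imK ^ 2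

open Classical in
/-- The Moore–Penrose inverse of a split quaternion: `0` if `a = 0`,
`conj a / I_a` if `I_a ≠ 0`, and `(conj z1 + z2 j)/(4 |z1|^2)` if `I_a = 0`
and `a ≠ 0`, where `a = z1 + z2 j`. -/
noncomputable def pinv (a : Hs) : Hs :=
  if a = 0 then 0
  else if Ix a ≠ 0 then (Ix a)⁻¹ • star a
  else (4 * (a.re ^ 2 + a.imI ^ 2))⁻¹ • (⟨a.re, -a.imI, a.imJ, a.imK⟩ : Hs)

theorem exists_mul_eq_iff_of_mul_mul_self {M : Type*} [Semigroup M] {a b : M} (hab : a * b * a = a)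
    (d : M) : (∃ x, a * x = d) ↔ a * b * d = d := by
  constructor
  · rintro ⟨x, rfl⟩
    rw [← mul_assoc, hab]
  · intro h
    exact ⟨b * d, by rw [← mul_assoc, h]⟩

theorem mul_star_eq_Ix (a : Hs) : a * star a = (Ix a : Hs) := by
  rw [QuaternionAlgebra.mul_star_eq_coe]
  congr 1
  simp only [QuaternionAlgebra.re_mul, QuaternionAlgebra.re_star, QuaternionAlgebra.imI_star,
    QuaternionAlgebra.imJ_star, QuaternionAlgebra.imK_star, Ix]
  ring

theorem re_sq_add_imI_sq_ne_zero {a : Hs} (ha : a ≠ 0) (hI : Ix a = 0) :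
    a.re ^ 2 + a.imI ^ 2 ≠ 0 := by
  intro h
  have hJK : a.imJ ^ 2 + a.imK ^ 2 = 0 := by unfold Ix at hI; linarith
  rw [add_eq_zero_iff_of_nonneg (sq_nonneg _) (sq_nonneg _), sq_eq_zero_iff, sq_eq_zero_iff]
    at h hJK
  exact ha (QuaternionAlgebra.ext h.1 h.2 hJK.1 hJK.2)

theorem mul_mul_self_of_Ix_eq_zero {a : Hs} (hI : Ix a = 0) :
    a * ⟨a.re, -a.imI, a.imJ, a.imK⟩ * a = (4 * (a.re ^ 2 + a.imI ^ 2)) • a := by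
  unfold Ix at hI
  ext <;>
    simp only [QuaternionAlgebra.re_mul, QuaternionAlgebra.imI_mul, QuaternionAlgebra.imJ_mul,
      QuaternionAlgebra.imK_mul, QuaternionAlgebra.re_smul, QuaternionAlgebra.imI_smul,
      QuaternionAlgebra.imJ_smul, QuaternionAlgebra.imK_smul, smul_eq_mul]
  · linear_combination (-3 * a.re) * hI
  · linear_combination (-3 * a.imI) * hI
  · linear_combination (-a.imJ) * hI
  · linear_combination (-a.imK) * hI

theorem mul_pinv_mul_self (a : Hs) : a * pinv a * a = a := by
  unfold pinv
  split_ifs with ha hI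
  · rw [ha, mul_zero]
  · rw [mul_smul_comm, smul_mul_assoc, mul_star_eq_Ix, QuaternionAlgebra.coe_mul_eq_smul,
      smul_smul, inv_mul_cancel₀ hI, one_smul]
  · have h4 : (4 : ℝ) * (a.re ^ 2 + a.imI ^ 2) ≠ 0 :=
      mul_ne_zero four_ne_zero (re_sq_add_imI_sq_ne_zero ha (not_not.mp hI))
    rw [mul_smul_comm, smul_mul_assoc, mul_mul_self_of_Ix_eq_zero (not_not.mp hI), smul_smul,
      inv_mul_cancel₀ h4, one_smul]

/-- The equation `a x = d` over the split quaternions is solvable iff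
`a * a⁺ * d = d`. -/
theorem linear_solvable_iff (a d : Hs) :
    (∃ x : Hs, a * x = d) ↔ a * pinv a * d = d :=
  exists_mul_eq_iff_of_mul_mul_self (mul_pinv_mul_self a) d
end

section
/- Let A be an n×n matrix over the split quaternions and p, q invertible split quaternions. Then λ is a left eigenvalue of A if and only if p λ q is a left eigenvalue of p A q. -/
open Quaternion

/-- `lam` is a left eigenvalue of a split quaternion matrix `A` if `A x = lam x`
for some vector `x` having at least one invertible (non-zero-divisor) component. -/
def IsLeftEigenvalue {n : ℕ} (A : Matrix (Fin n) (Fin n) Hs) (lam : Hs) : Prop :=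
  ∃ x : Fin n → Hs, (∃ i, IsUnit (x i)) ∧ A.mulVec x = fun i => lam * x i

section

variable {R ι : Type*} [Fintype ι]

theorem Matrix.of_mul_mul_mulVec [Semiring R] (A : Matrix ι ι R) (p q : R) (y : ι → R) :
    (Matrix.of fun i j => p * A i j * q).mulVec y =
      fun i => p * A.mulVec (fun j => q * y j) i := by
  funext i
  simp only [Matrix.mulVec, dotProduct, Matrix.of_apply, Finset.mul_sum, mul_assoc]

theorem Matrix.of_mul_mul_mulVec_eq_iff [Ring R] (A : Matrix ι ι R) (p : Rˣ) (q lam : R)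
    (y : ι → R) :
    (Matrix.of fun i j => ↑p * A i j * q).mulVec y = (fun i => ↑p * lam * q * y i) ↔
      A.mulVec (fun j => q * y j) = fun i => lam * (q * y i) := by
  rw [Matrix.of_mul_mul_mulVec]
  simp only [funext_iff, mul_assoc, Units.mul_right_inj]

end

/-- For invertible split quaternions `p, q`, `lam` is a left eigenvalue of `A`
iff `p * lam * q` is a left eigenvalue of `p A q`. -/
theorem leftEig_conj_iff {n : ℕ} (A : Matrix (Fin n) (Fin n) Hs) (p q lam : Hs)
    (hp : IsUnit p) (hq : IsUnit q) :
    IsLeftEigenvalue A lam ↔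
      IsLeftEigenvalue (Matrix.of fun i j => p * A i j * q) (p * lam * q) := by
  obtain ⟨p, rfl⟩ := hp
  obtain ⟨q, rfl⟩ := hq
  simp only [IsLeftEigenvalue, Matrix.of_mul_mul_mulVec_eq_iff]
  constructor
  · rintro ⟨x, ⟨i, hi⟩, hx⟩
    refine ⟨fun j => ↑q⁻¹ * x j, ⟨i, (q⁻¹).isUnit.mul hi⟩, ?_⟩
    simpa only [Units.mul_inv_cancel_left] using hx
  · rintro ⟨y, ⟨i, hi⟩, hy⟩
    exact ⟨_, ⟨i, q.isUnit.mul hi⟩, hy⟩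
end

section
/- Let A be the 2×2 lower triangular split quaternion matrix with rows (a, 0) and (c, d). For any split quaternion x satisfying c x^2 + (d - a) x = 0, the element λ = c x + d is a left eigenvalue of A with eigenvector (x, 1)^T. In particular (taking x = 0), d is always a left eigenvalue of A. -/
open Quaternion Matrix

theorem lowerTriangular_mulVec_eq_of_quadratic {R : Type*} [Ring R] {a c d x : R}
    (hx : c * x ^ 2 + (d - a) * x = 0) :
    !![a, 0; c, d] *ᵥ ![x, 1] = fun i => (c * x + d) * ![x, 1] i := by
  have hax : a * x = (c * x + d) * x :=
    (sub_eq_zero.mp (by rw [← hx]; noncomm_ring)).symm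
  ext i
  fin_cases i <;> simp [mulVec, dotProduct, hax]

theorem isLeftEigenvalue_of_mulVec_vecCons_one {A : Matrix (Fin 2) (Fin 2) Hs} {lam x : Hs}
    (h : A *ᵥ ![x, 1] = fun i => lam * ![x, 1] i) : IsLeftEigenvalue A lam :=
  ⟨![x, 1], ⟨1, by simp⟩, h⟩

/-- For the lower triangular matrix `![![a, 0], ![c, d]]`, whenever
`c x² + (d - a) x = 0`, the element `c x + d` is a left eigenvalue with
eigenvector `(x, 1)ᵀ`; in particular `d` is always a left eigenvalue. -/
theorem lower_triangular_eig_quadratic (a c d : Hs) :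
    (∀ x : Hs, c * x ^ 2 + (d - a) * x = 0 →
      (Matrix.mulVec !![a, 0; c, d] ![x, 1] = fun i => (c * x + d) * (![x, 1] i)) ∧
        IsLeftEigenvalue !![a, 0; c, d] (c * x + d)) ∧
      IsLeftEigenvalue !![a, 0; c, d] d := by
  have eigen : ∀ x : Hs, c * x ^ 2 + (d - a) * x = 0 →
      (Matrix.mulVec !![a, 0; c, d] ![x, 1] = fun i => (c * x + d) * (![x, 1] i)) ∧
        IsLeftEigenvalue !![a, 0; c, d] (c * x + d) := fun x hx =>
    have h := lowerTriangular_mulVec_eq_of_quadratic hx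
    ⟨h, isLeftEigenvalue_of_mulVec_vecCons_one h⟩
  refine ⟨eigen, ?_⟩
  simpa using (eigen 0 (by simp)).2
end

section
/- Let A be the 2×2 upper triangular split quaternion matrix with rows (a, b) and (0, d). For any split quaternion x with b x^2 + (a - d) x = 0, the element λ = a + b x is a left eigenvalue of A with eigenvector (1, x)^T; and for any x with (d - a) x = b, the element d is a left eigenvalue with eigenvector (x, 1)^T. -/
open Quaternion

namespace Matrix

variable {R : Type*} [Ring R]

theorem upperTriangular_mulVec_eq_mul_iff (a b d l u v : R) :
    (!![a, b; 0, d] *ᵥ ![u, v] = fun i => l * ![u, v] i) ↔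
      a * u + b * v = l * u ∧ d * v = l * v := by
  simp [funext_iff, Fin.forall_fin_two]

theorem upperTriangular_mulVec_one_left {a b d x : R} (hx : b * x ^ 2 + (a - d) * x = 0) :
    !![a, b; 0, d] *ᵥ ![1, x] = fun i => (a + b * x) * ![1, x] i := by
  refine (upperTriangular_mulVec_eq_mul_iff ..).2 ⟨by noncomm_ring, ?_⟩
  calc d * x = d * x + (b * x ^ 2 + (a - d) * x) := by rw [hx, add_zero]
    _ = (a + b * x) * x := by noncomm_ring

theorem upperTriangular_mulVec_one_right {a b d x : R} (hx : (d - a) * x = b) :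
    !![a, b; 0, d] *ᵥ ![x, 1] = fun i => d * ![x, 1] i := by
  refine (upperTriangular_mulVec_eq_mul_iff ..).2 ⟨?_, by simp⟩
  rw [← hx]
  noncomm_ring

end Matrix

open Matrix

/-- For the upper triangular matrix `![![a, b], ![0, d]]`: if
`b x² + (a - d) x = 0` then `a + b x` is a left eigenvalue with eigenvector
`(1, x)ᵀ`; and if `(d - a) x = b` then `d` is a left eigenvalue with
eigenvector `(x, 1)ᵀ`. -/
theorem upper_triangular_eigs (a b d : Hs) :
    (∀ x : Hs, b * x ^ 2 + (a - d) * x = 0 →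
      (Matrix.mulVec !![a, b; 0, d] ![1, x] = fun i => (a + b * x) * (![1, x] i)) ∧
        IsLeftEigenvalue !![a, b; 0, d] (a + b * x)) ∧
    (∀ x : Hs, (d - a) * x = b →
      (Matrix.mulVec !![a, b; 0, d] ![x, 1] = fun i => d * (![x, 1] i)) ∧
        IsLeftEigenvalue !![a, b; 0, d] d) := by
  constructor
  · intro x hx
    have hv := upperTriangular_mulVec_one_left hx
    exact ⟨hv, ![1, x], ⟨0, isUnit_one⟩, hv⟩
  · intro x hx
    have hv := upperTriangular_mulVec_one_right hx
    exact ⟨hv, ![x, 1], ⟨1, isUnit_one⟩, hv⟩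
end

section
/- Let A be a 2×2 split quaternion matrix with entries a, b (first row) and c, d (second row). If x is a split quaternion satisfying b x^2 + (a - d) x - c = 0, then λ = a + b x is a left eigenvalue of A with eigenvector (1, x)^T. Symmetrically, if x satisfies c x^2 + (d - a) x - b = 0, then λ = d + c x is a left eigenvalue with eigenvector (x, 1)^T. -/
open Quaternion

/-! The first row of `A (1, x)ᵀ` is `a + b x` times `1`, so `a + b x` is the only candidate
eigenvalue; the second row then asks `c + d x = (a + b x) x`, which is the Riccati equation
`b x² + (a - d) x - c = 0` rearranged, valid in any (noncommutative) ring. -/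

section Riccati

open scoped Matrix

variable {R : Type*} [Ring R] {a b c d x : R}

theorem Matrix.mulVec_one_vec_of_riccati (h : b * x ^ 2 + (a - d) * x - c = 0) :
    !![a, b; c, d] *ᵥ ![1, x] = fun i => (a + b * x) * ![1, x] i := by
  have second_row : (a + b * x) * x = c + d * x := by
    rw [← sub_eq_zero, ← h]
    noncomm_ring
  funext i
  fin_cases i <;> simp [Matrix.mulVec, dotProduct, second_row]

theorem Matrix.mulVec_vec_one_of_riccati (h : c * x ^ 2 + (d - a) * x - b = 0) :
    !![a, b; c, d] *ᵥ ![x, 1] = fun i => (d + c * x) * ![x, 1] i := by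
  have first_row : (d + c * x) * x = a * x + b := by
    rw [← sub_eq_zero, ← h]
    noncomm_ring
  funext i
  fin_cases i <;> simp [Matrix.mulVec, dotProduct, first_row, add_comm]

end Riccati

/-- For `A = ![![a, b], ![c, d]]`: if `b x² + (a - d) x - c = 0` then
`a + b x` is a left eigenvalue with eigenvector `(1, x)ᵀ`; and if
`c x² + (d - a) x - b = 0` then `d + c x` is a left eigenvalue with
eigenvector `(x, 1)ᵀ`. -/
theorem general_2x2_eigs (a b c d : Hs) :
    (∀ x : Hs, b * x ^ 2 + (a - d) * x - c = 0 →
      (Matrix.mulVec !![a, b; c, d] ![1, x] = fun i => (a + b * x) * (![1, x] i)) ∧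
        IsLeftEigenvalue !![a, b; c, d] (a + b * x)) ∧
    (∀ x : Hs, c * x ^ 2 + (d - a) * x - b = 0 →
      (Matrix.mulVec !![a, b; c, d] ![x, 1] = fun i => (d + c * x) * (![x, 1] i)) ∧
        IsLeftEigenvalue !![a, b; c, d] (d + c * x)) := by
  refine ⟨fun x hx => ?_, fun x hx => ?_⟩
  · have eigen := Matrix.mulVec_one_vec_of_riccati hx
    exact ⟨eigen, ![1, x], ⟨0, by simp⟩, eigen⟩
  · have eigen := Matrix.mulVec_vec_one_of_riccati hx
    exact ⟨eigen, ![x, 1], ⟨1, by simp⟩, eigen⟩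
end

section
/- The split quaternion equation x^2 = (-3 + i + j + k)/8 has no solution in H_s. Consequently, the 2×2 matrix A with rows (1, 1) and (-3 - i - j - k, 1) admits no split quaternion x satisfying x^2 + 3 + i + j + k = 0 and no x satisfying (-3 - i - j - k) x^2 - 1 = 0. -/
/-!
Writing `x = a + v` with `v` pure, one has `x² = a² + v² + 2a v` where `v² = q(v)` is a scalar.
If `x² = w` with `im w ≠ 0`, then `a ≠ 0`, `v = im w / 2a`, and
`4a² re w = 4a⁴ + q(im w)`. For `w = (-3 + i + j + k)/8` the right side is positive while
`re w < 0`; the same holds for `w = -3 - i - j - k`. Finally `(-3 - i - j - k) x² = 1` forces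
`x² = (-3 + i + j + k)/8`, the left inverse of `-3 - i - j - k`.
-/

open Quaternion

/-- The basis element `i` of the split quaternions. -/
def iq : Hs := ⟨0, 1, 0, 0⟩

/-- The basis element `k` of the split quaternions. -/
def kq : Hs := ⟨0, 0, 0, 1⟩

namespace QuaternionAlgebra

section CommRing

variable {R : Type*} [CommRing R] {c₁ c₃ : R} (x : ℍ[R,c₁,0,c₃])

theorem re_sq :
    (x ^ 2).re = x.re ^ 2 + c₁ * x.imI ^ 2 + c₃ * x.imJ ^ 2 - c₁ * c₃ * x.imK ^ 2 := by
  simp only [sq, re_mul]; ring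

theorem imI_sq : (x ^ 2).imI = 2 * x.re * x.imI := by
  simp only [sq, imI_mul]; ring

theorem imJ_sq : (x ^ 2).imJ = 2 * x.re * x.imJ := by
  simp only [sq, imJ_mul]; ring

theorem imK_sq : (x ^ 2).imK = 2 * x.re * x.imK := by
  simp only [sq, imK_mul]; ring

end CommRing

theorem sq_ne_of_re_neg_of_im_ne_zero {R : Type*} [CommRing R] [LinearOrder R]
    [IsStrictOrderedRing R] {c₁ c₃ : R} (x w : ℍ[R,c₁,0,c₃]) (hre : w.re < 0)
    (him : w.im ≠ 0) (him_sq : 0 ≤ c₁ * w.imI ^ 2 + c₃ * w.imJ ^ 2 - c₁ * c₃ * w.imK ^ 2) :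
    x ^ 2 ≠ w := by
  rintro rfl
  rw [re_sq] at hre
  rw [imI_sq, imJ_sq, imK_sq] at him_sq
  have hx_re : x.re ≠ 0 := by
    intro h
    exact him (by ext <;> simp [imI_sq, imJ_sq, imK_sq, h])
  have hx_re_sq := sq_pos_of_ne_zero hx_re
  -- the left side equals `4 a⁴ + q(im x²)`
  have : 0 ≤ 4 * x.re ^ 2 *
      (x.re ^ 2 + c₁ * x.imI ^ 2 + c₃ * x.imJ ^ 2 - c₁ * c₃ * x.imK ^ 2) := by
    nlinarith [pow_pos hx_re_sq 2]
  nlinarith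

end QuaternionAlgebra

/-- The equation `x² = (-3 + i + j + k)/8` has no split quaternion solution;
consequently there is no `x` with `x² + 3 + i + j + k = 0` and no `x` with
`(-3 - i - j - k) x² - 1 = 0`. -/
theorem no_solution_example :
    (¬ ∃ x : Hs, x ^ 2 = (8 : ℝ)⁻¹ • (-3 + iq + jq + kq)) ∧
    (¬ ∃ x : Hs, x ^ 2 + 3 + iq + jq + kq = 0) ∧
    (¬ ∃ x : Hs, (-3 - iq - jq - kq) * x ^ 2 - 1 = 0) := by
  have hw : (8 : ℝ)⁻¹ • (-3 + iq + jq + kq) = ⟨-3 / 8, 1 / 8, 1 / 8, 1 / 8⟩ := by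
    ext <;> norm_num [iq, jq, kq, QuaternionAlgebra.re_ofNat, QuaternionAlgebra.imI_ofNat,
      QuaternionAlgebra.imJ_ofNat, QuaternionAlgebra.imK_ofNat]
  have hw' : -(3 + iq + jq + kq) = ⟨-3, -1, -1, -1⟩ := by
    ext <;> norm_num [iq, jq, kq, QuaternionAlgebra.re_ofNat, QuaternionAlgebra.imI_ofNat,
      QuaternionAlgebra.imJ_ofNat, QuaternionAlgebra.imK_ofNat]
  have hw_mul : (8 : ℝ)⁻¹ • (-3 + iq + jq + kq) * (-3 - iq - jq - kq) = 1 := by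
    ext <;> norm_num [iq, jq, kq, QuaternionAlgebra.re_ofNat, QuaternionAlgebra.imI_ofNat,
      QuaternionAlgebra.imJ_ofNat, QuaternionAlgebra.imK_ofNat]
  have no_sqrt : ¬ ∃ x : Hs, x ^ 2 = (8 : ℝ)⁻¹ • (-3 + iq + jq + kq) := by
    rintro ⟨x, hx⟩
    rw [hw] at hx
    exact QuaternionAlgebra.sq_ne_of_re_neg_of_im_ne_zero x _ (by norm_num)
      (by simp [QuaternionAlgebra.ext_iff]) (by norm_num) hx
  refine ⟨no_sqrt, ?_, ?_⟩
  · rintro ⟨x, hx⟩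
    have hx' : x ^ 2 = -(3 + iq + jq + kq) :=
      eq_neg_of_add_eq_zero_left (by simpa only [add_assoc] using hx)
    rw [hw'] at hx'
    exact QuaternionAlgebra.sq_ne_of_re_neg_of_im_ne_zero x _ (by norm_num)
      (by simp [QuaternionAlgebra.ext_iff]) (by norm_num) hx'
  · rintro ⟨x, hx⟩
    exact no_sqrt ⟨x, (left_inv_eq_right_inv hw_mul (sub_eq_zero.mp hx)).symm⟩
end
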